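/- arXiv:2111.11782 — 2 statements merged into one kernel-verified Lean document; each statement's English description precedes it below -/
import Mathlib

section
/- Let $(X_0, X_1)$ be a $p$-convex quasi-Banach lattice couple, $0 < p \leq 1$, and let $r \geq 1/p$. Then for every $x \in X_0 + X_1$, the $r$-convexification of the $K$-orbit space satisfies $Orb^K(x; X_0, X_1)^{(r)} = Orb^K(x; X_0^{(r)}, X_1^{(r)})$ with equivalent quasi-norms. -/
open ENNReal

noncomputable section

variable {α : Type*}

def IsLatticeQN (N : (α → ℝ) → ℝ≥0∞) (C : ℝ≥0∞) : Prop :=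
  1 ≤ C ∧ C < ∞ ∧ N 0 = 0 ∧
    (∀ (c : ℝ) (f : α → ℝ), N (c • f) = ENNReal.ofReal |c| * N f) ∧
    (∀ f g : α → ℝ, N (f + g) ≤ C * (N f + N g)) ∧
    ∀ f g : α → ℝ, (∀ s, |f s| ≤ |g s|) → N f ≤ N g

def PConvex (N : (α → ℝ) → ℝ≥0∞) (p : ℝ) (M : ℝ≥0∞) : Prop :=
  ∀ (n : ℕ) (x : Fin n → α → ℝ),
    N (fun s => (∑ k, |x k s| ^ p) ^ (1 / p)) ≤ M * (∑ k, (N (x k)) ^ p) ^ (1 / p)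

def Kfun (N0 N1 : (α → ℝ) → ℝ≥0∞) (t : ℝ) (x : α → ℝ) : ℝ≥0∞ :=
  ⨅ (y : (α → ℝ) × (α → ℝ)) (_ : x = y.1 + y.2), N0 y.1 + ENNReal.ofReal t * N1 y.2

/-- The K-functional of the couple of `r`-convexifications
`(X₀^{(r)}, X₁^{(r)})`: `X^{(r)}` has quasi-norm `‖·‖^{1/r}` and addition
`x ⊕ y = (x^{1/r} + y^{1/r})^r`. -/
def Kconv (N0 N1 : (α → ℝ) → ℝ≥0∞) (r t : ℝ) (f : α → ℝ) : ℝ≥0∞ :=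
  ⨅ (g : (α → ℝ) × (α → ℝ))
    (_ : ∀ s, 0 ≤ g.1 s ∧ 0 ≤ g.2 s ∧
        |f s| = (g.1 s ^ (1 / r) + g.2 s ^ (1 / r)) ^ r),
    N0 g.1 ^ (1 / r) + ENNReal.ofReal t * N1 g.2 ^ (1 / r)

/-- The K-orbit quasi-norm `‖y‖ = sup_{t>0} K(t, y)/K(t, x)` associated to a
K-functional `K`. -/
def OrbN {β : Type*} (K : ℝ → β → ℝ≥0∞) (x y : β) : ℝ≥0∞ :=
  ⨆ (t : ℝ) (_ : 0 < t), K t y / K t x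

set_option linter.unusedVariables false

namespace OrbitConvAux

lemma ern_rpow_rpow_inv {r : ℝ} (hr0 : 0 < r) (x : ℝ≥0∞) : (x ^ r) ^ (1/r) = x := by
  rw [← ENNReal.rpow_mul, mul_one_div_cancel (ne_of_gt hr0), ENNReal.rpow_one]
lemma ern_rpow_inv_rpow {r : ℝ} (hr0 : 0 < r) (x : ℝ≥0∞) : (x ^ (1/r)) ^ r = x := by
  rw [← ENNReal.rpow_mul, one_div_mul_cancel (ne_of_gt hr0), ENNReal.rpow_one]
lemma real_rpow_rpow_inv {a r : ℝ} (ha : 0 ≤ a) (hr0 : 0 < r) : (a ^ r) ^ (1/r) = a := by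
  rw [← Real.rpow_mul ha, mul_one_div_cancel (ne_of_gt hr0), Real.rpow_one]
lemma real_rpow_inv_rpow {a r : ℝ} (ha : 0 ≤ a) (hr0 : 0 < r) : (a ^ (1/r)) ^ r = a := by
  rw [← Real.rpow_mul ha, one_div_mul_cancel (ne_of_gt hr0), Real.rpow_one]
lemma real_subadd {a b s : ℝ} (ha : 0 ≤ a) (hb : 0 ≤ b) (hs0 : 0 ≤ s) (hs1 : s ≤ 1) :
    (a + b) ^ s ≤ a ^ s + b ^ s := by
  have h := NNReal.rpow_add_le_add_rpow a.toNNReal b.toNNReal hs0 hs1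
  have h' := NNReal.coe_le_coe.2 h
  simpa [← Real.toNNReal_add ha hb, NNReal.coe_rpow, Real.coe_toNNReal _ ha,
    Real.coe_toNNReal _ hb, Real.coe_toNNReal _ (add_nonneg ha hb)] using h'

/-- Lemma B : `Kconv(t,f) ≤ 2 * Kfun(t^r,f)^{1/r}`. -/
lemma kconv_le_kfun (N0 N1 : (α → ℝ) → ℝ≥0∞) {C0 C1 : ℝ≥0∞}
    (h0 : IsLatticeQN N0 C0) (h1 : IsLatticeQN N1 C1)
    {r : ℝ} (hr1 : 1 ≤ r) {t : ℝ} (ht : 0 < t) (f : α → ℝ) :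
    Kconv N0 N1 r t f ≤ 2 * (Kfun N0 N1 (t ^ r) f) ^ (1/r) := by
  have hr0 : 0 < r := lt_of_lt_of_le one_pos hr1
  have key : ∀ y : (α → ℝ) × (α → ℝ), f = y.1 + y.2 →
      Kconv N0 N1 r t f ≤
        2 * (N0 y.1 + ENNReal.ofReal (t ^ r) * N1 y.2) ^ (1/r) := by
    intro y hy
    set u1 : α → ℝ := fun s => min (|f s| ^ (1/r)) (|y.1 s| ^ (1/r)) with hu1
    set u2 : α → ℝ := fun s => |f s| ^ (1/r) - u1 s with hu2
    set g1 : α → ℝ := fun s => u1 s ^ r with hg1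
    set g2 : α → ℝ := fun s => u2 s ^ r with hg2
    have hu1n : ∀ s, 0 ≤ u1 s := fun s =>
      le_min (Real.rpow_nonneg (abs_nonneg _) _) (Real.rpow_nonneg (abs_nonneg _) _)
    have hu2n : ∀ s, 0 ≤ u2 s := fun s => sub_nonneg.mpr (min_le_left _ _)
    have hcond : ∀ s, 0 ≤ g1 s ∧ 0 ≤ g2 s ∧
        |f s| = (g1 s ^ (1/r) + g2 s ^ (1/r)) ^ r := by
      intro s
      refine ⟨Real.rpow_nonneg (hu1n s) _, Real.rpow_nonneg (hu2n s) _, ?_⟩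
      have e1 : g1 s ^ (1/r) = u1 s := real_rpow_rpow_inv (hu1n s) hr0
      have e2 : g2 s ^ (1/r) = u2 s := real_rpow_rpow_inv (hu2n s) hr0
      rw [e1, e2]
      have e3 : u1 s + u2 s = |f s| ^ (1/r) := by simp [hu2]
      rw [e3, real_rpow_inv_rpow (abs_nonneg _) hr0]
    have hb1 : ∀ s, |g1 s| ≤ |y.1 s| := by
      intro s
      rw [abs_of_nonneg (Real.rpow_nonneg (hu1n s) _)]
      calc u1 s ^ r ≤ (|y.1 s| ^ (1/r)) ^ r :=
            Real.rpow_le_rpow (hu1n s) (min_le_right _ _) hr0.le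
      _ = |y.1 s| := real_rpow_inv_rpow (abs_nonneg _) hr0
    have hb2 : ∀ s, |g2 s| ≤ |y.2 s| := by
      intro s
      rw [abs_of_nonneg (Real.rpow_nonneg (hu2n s) _)]
      have hsub : |f s| ^ (1/r) ≤ |y.1 s| ^ (1/r) + |y.2 s| ^ (1/r) := by
        have h1 : |f s| ≤ |y.1 s| + |y.2 s| := by
          rw [hy]; exact abs_add_le _ _
        calc |f s| ^ (1/r) ≤ (|y.1 s| + |y.2 s|) ^ (1/r) :=
              Real.rpow_le_rpow (abs_nonneg _) h1 (by positivity)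
        _ ≤ |y.1 s| ^ (1/r) + |y.2 s| ^ (1/r) :=
              real_subadd (abs_nonneg _) (abs_nonneg _) (by positivity)
                (by rw [div_le_one hr0]; linarith)
      have hu2le : u2 s ≤ |y.2 s| ^ (1/r) := by
        rcases min_cases (|f s| ^ (1/r)) (|y.1 s| ^ (1/r))
            with ⟨hmin, _⟩ | ⟨hmin, _⟩
        · simp only [hu2, hu1] at *
          rw [hmin]; simp [Real.rpow_nonneg (abs_nonneg _)]
        · simp only [hu2, hu1] at *
          rw [hmin]; linarith
      calc u2 s ^ r ≤ (|y.2 s| ^ (1/r)) ^ r :=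
            Real.rpow_le_rpow (hu2n s) hu2le hr0.le
      _ = |y.2 s| := real_rpow_inv_rpow (abs_nonneg _) hr0
    have hKle : Kconv N0 N1 r t f ≤ N0 g1 ^ (1/r) + ENNReal.ofReal t * N1 g2 ^ (1/r) :=
      iInf₂_le (g1, g2) hcond
    have hN0 : N0 g1 ≤ N0 y.1 := h0.2.2.2.2.2 g1 y.1 hb1
    have hN1 : N1 g2 ≤ N1 y.2 := h1.2.2.2.2.2 g2 y.2 hb2
    set W := N0 y.1 + ENNReal.ofReal (t ^ r) * N1 y.2 with hW
    have e1 : N0 g1 ^ (1/r) ≤ W ^ (1/r) :=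
      ENNReal.rpow_le_rpow (hN0.trans (self_le_add_right _ _)) (by positivity)
    have e2 : ENNReal.ofReal t * N1 g2 ^ (1/r) ≤ W ^ (1/r) := by
      have em : ENNReal.ofReal t * N1 g2 ^ (1/r)
          = (ENNReal.ofReal (t ^ r) * N1 g2) ^ (1/r) := by
        rw [ENNReal.mul_rpow_of_nonneg _ _ (by positivity : (0:ℝ) ≤ 1/r),
          ← ENNReal.ofReal_rpow_of_pos ht, ern_rpow_rpow_inv hr0]
      rw [em]
      refine ENNReal.rpow_le_rpow ?_ (by positivity)
      exact (mul_le_mul_right hN1 _).trans (self_le_add_left _ _)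
    calc Kconv N0 N1 r t f ≤ N0 g1 ^ (1/r) + ENNReal.ofReal t * N1 g2 ^ (1/r) := hKle
    _ ≤ W ^ (1/r) + W ^ (1/r) := add_le_add e1 e2
    _ = 2 * W ^ (1/r) := (two_mul _).symm
  -- wrap: infimum over decompositions
  have step : (Kconv N0 N1 r t f / 2) ^ r ≤ Kfun N0 N1 (t ^ r) f := by
    refine le_iInf₂ fun y hy => ?_
    have hk := key y hy
    have h' : Kconv N0 N1 r t f / 2 ≤ (N0 y.1 + ENNReal.ofReal (t ^ r) * N1 y.2) ^ (1/r) := by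
      rw [ENNReal.div_le_iff_le_mul (Or.inl two_ne_zero) (Or.inl ENNReal.ofNat_ne_top), mul_comm]
      exact hk
    calc (Kconv N0 N1 r t f / 2) ^ r
        ≤ ((N0 y.1 + ENNReal.ofReal (t ^ r) * N1 y.2) ^ (1/r)) ^ r :=
          ENNReal.rpow_le_rpow h' hr0.le
    _ = _ := ern_rpow_inv_rpow hr0 _
  have step2 : Kconv N0 N1 r t f / 2 ≤ (Kfun N0 N1 (t ^ r) f) ^ (1/r) := by
    have := ENNReal.rpow_le_rpow step (by positivity : (0:ℝ) ≤ 1/r)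
    rwa [ern_rpow_rpow_inv hr0] at this
  rw [mul_comm]
  exact (ENNReal.div_le_iff_le_mul (Or.inl two_ne_zero) (Or.inl ENNReal.ofNat_ne_top)).mp step2

/-- Lemma A : `Kfun(t^r,f)^{1/r} ≤ 4 * Kconv(t,f)`. -/
lemma kfun_le_kconv (N0 N1 : (α → ℝ) → ℝ≥0∞) {C0 C1 : ℝ≥0∞}
    (h0 : IsLatticeQN N0 C0) (h1 : IsLatticeQN N1 C1)
    {r : ℝ} (hr1 : 1 ≤ r) {t : ℝ} (ht : 0 < t) (f : α → ℝ) :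
    (Kfun N0 N1 (t ^ r) f) ^ (1/r) ≤ 4 * Kconv N0 N1 r t f := by
  have hr0 : 0 < r := lt_of_lt_of_le one_pos hr1
  have h4 : (4:ℝ≥0∞) ≠ 0 := by norm_num
  have h4' : (4:ℝ≥0∞) ≠ ∞ := by norm_num
  have key : ∀ g : (α → ℝ) × (α → ℝ),
      (∀ s, 0 ≤ g.1 s ∧ 0 ≤ g.2 s ∧ |f s| = (g.1 s ^ (1/r) + g.2 s ^ (1/r)) ^ r) →
      (Kfun N0 N1 (t ^ r) f) ^ (1/r) ≤
        4 * (N0 g.1 ^ (1/r) + ENNReal.ofReal t * N1 g.2 ^ (1/r)) := by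
    intro g hg
    set c : ℝ := (2:ℝ) ^ r with hc
    have hcpos : (0:ℝ) < c := Real.rpow_pos_of_pos two_pos r
    -- pointwise bound |f| ≤ c * (g1 + g2)
    have hf_le : ∀ s, |f s| ≤ c * (g.1 s + g.2 s) := by
      intro s
      obtain ⟨h1s, h2s, hfs⟩ := hg s
      set a := g.1 s ^ (1/r) with ha'
      set b := g.2 s ^ (1/r) with hb'
      have ha : (0:ℝ) ≤ a := Real.rpow_nonneg h1s _
      have hb : (0:ℝ) ≤ b := Real.rpow_nonneg h2s _
      have har : a ^ r = g.1 s := real_rpow_inv_rpow h1s hr0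
      have hbr : b ^ r = g.2 s := real_rpow_inv_rpow h2s hr0
      have key2 : (a + b) ^ r ≤ c * (a ^ r + b ^ r) := by
        rcases le_total a b with h | h
        · calc (a + b) ^ r ≤ (2 * b) ^ r :=
              Real.rpow_le_rpow (by linarith) (by linarith) hr0.le
          _ = c * b ^ r := by rw [Real.mul_rpow (by norm_num) hb]
          _ ≤ c * (a ^ r + b ^ r) := by
              have h1 : (0:ℝ) ≤ a ^ r := Real.rpow_nonneg ha r
              nlinarith
        · calc (a + b) ^ r ≤ (2 * a) ^ r :=
              Real.rpow_le_rpow (by linarith) (by linarith) hr0.le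
          _ = c * a ^ r := by rw [Real.mul_rpow (by norm_num) ha]
          _ ≤ c * (a ^ r + b ^ r) := by
              have h1 : (0:ℝ) ≤ b ^ r := Real.rpow_nonneg hb r
              nlinarith
      rw [hfs]
      calc (a + b) ^ r ≤ c * (a ^ r + b ^ r) := key2
      _ = c * (g.1 s + g.2 s) := by rw [har, hbr]
    classical
    set m : α → ℝ := fun s => min |f s| (c * g.1 s) with hm
    set y1 : α → ℝ := fun s => if 0 ≤ f s then m s else -(m s) with hy1
    set y2 : α → ℝ := f - y1 with hy2
    have hsum : f = y1 + y2 := by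
      funext s; simp [hy2]
    have hmn : ∀ s, 0 ≤ m s := fun s =>
      le_min (abs_nonneg _) (mul_nonneg hcpos.le (hg s).1)
    have hb1 : ∀ s, |y1 s| ≤ |(c • g.1) s| := by
      intro s
      have h1 : |y1 s| = m s := by
        by_cases hfs : 0 ≤ f s
        · simp [hy1, hfs, abs_of_nonneg (hmn s)]
        · simp [hy1, hfs, abs_of_nonneg (hmn s)]
      rw [h1, Pi.smul_apply, smul_eq_mul,
        abs_of_nonneg (mul_nonneg hcpos.le (hg s).1)]
      exact min_le_right _ _
    have hb2 : ∀ s, |y2 s| ≤ |(c • g.2) s| := by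
      intro s
      have hmle : m s ≤ |f s| := min_le_left _ _
      have h1 : |y2 s| = |f s| - m s := by
        by_cases hfs : 0 ≤ f s
        · have e : y2 s = f s - m s := by simp [hy2, hy1, hfs]
          rw [e, abs_of_nonneg (by rw [abs_of_nonneg hfs] at hmle; linarith),
            abs_of_nonneg hfs]
        · have hfs' : f s < 0 := lt_of_not_ge hfs
          have e : y2 s = f s + m s := by simp [hy2, hy1, hfs]
          rw [e, abs_of_nonpos (by rw [abs_of_neg hfs'] at hmle; linarith),
            abs_of_neg hfs']
          ring
      rw [h1, Pi.smul_apply, smul_eq_mul,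
        abs_of_nonneg (mul_nonneg hcpos.le (hg s).2.1)]
      rcases le_total |f s| (c * g.1 s) with h | h
      · have : m s = |f s| := min_eq_left h
        rw [this]
        simp [mul_nonneg hcpos.le (hg s).2.1]
      · have : m s = c * g.1 s := min_eq_right h
        rw [this]
        have := hf_le s
        linarith [hf_le s]
    have hN0 : N0 y1 ≤ ENNReal.ofReal c * N0 g.1 := by
      calc N0 y1 ≤ N0 (c • g.1) := h0.2.2.2.2.2 y1 (c • g.1) hb1
      _ = ENNReal.ofReal |c| * N0 g.1 := h0.2.2.2.1 c g.1
      _ = ENNReal.ofReal c * N0 g.1 := by rw [abs_of_pos hcpos]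
    have hN1 : N1 y2 ≤ ENNReal.ofReal c * N1 g.2 := by
      calc N1 y2 ≤ N1 (c • g.2) := h1.2.2.2.2.2 y2 (c • g.2) hb2
      _ = ENNReal.ofReal |c| * N1 g.2 := h1.2.2.2.1 c g.2
      _ = ENNReal.ofReal c * N1 g.2 := by rw [abs_of_pos hcpos]
    have hK : Kfun N0 N1 (t ^ r) f ≤ N0 y1 + ENNReal.ofReal (t ^ r) * N1 y2 :=
      iInf₂_le (y1, y2) hsum
    have hcE : ENNReal.ofReal c = (2:ℝ≥0∞) ^ r := by
      rw [hc, ← ENNReal.ofReal_rpow_of_pos two_pos]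
      norm_num
    have htE : ENNReal.ofReal (t ^ r) = ENNReal.ofReal t ^ r :=
      (ENNReal.ofReal_rpow_of_pos ht).symm
    set V := N0 g.1 ^ (1/r) + ENNReal.ofReal t * N1 g.2 ^ (1/r) with hV
    have hA : N0 g.1 ≤ V ^ r := by
      calc N0 g.1 = (N0 g.1 ^ (1/r)) ^ r := (ern_rpow_inv_rpow hr0 _).symm
      _ ≤ V ^ r := ENNReal.rpow_le_rpow (self_le_add_right _ _) hr0.le
    have hB : ENNReal.ofReal t ^ r * N1 g.2 ≤ V ^ r := by
      calc ENNReal.ofReal t ^ r * N1 g.2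
          = (ENNReal.ofReal t * N1 g.2 ^ (1/r)) ^ r := by
            rw [ENNReal.mul_rpow_of_nonneg _ _ hr0.le, ern_rpow_inv_rpow hr0]
      _ ≤ V ^ r := ENNReal.rpow_le_rpow (self_le_add_left _ _) hr0.le
    have hmain : Kfun N0 N1 (t ^ r) f ≤ (4:ℝ≥0∞) ^ r * V ^ r := by
      calc Kfun N0 N1 (t ^ r) f ≤ N0 y1 + ENNReal.ofReal (t ^ r) * N1 y2 := hK
      _ ≤ ENNReal.ofReal c * N0 g.1 +
            ENNReal.ofReal (t ^ r) * (ENNReal.ofReal c * N1 g.2) :=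
          add_le_add hN0 (mul_le_mul_right hN1 _)
      _ = (2:ℝ≥0∞) ^ r * (N0 g.1 + ENNReal.ofReal t ^ r * N1 g.2) := by
          rw [hcE, htE]; ring
      _ ≤ (2:ℝ≥0∞) ^ r * (V ^ r + V ^ r) :=
          mul_le_mul_right (add_le_add hA hB) _
      _ = (2:ℝ≥0∞) ^ r * 2 * V ^ r := by ring
      _ ≤ (4:ℝ≥0∞) ^ r * V ^ r := by
          refine mul_le_mul_left ?_ _
          have e2 : (2:ℝ≥0∞) ^ r * 2 = (2:ℝ≥0∞) ^ (r + 1) := by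
            rw [ENNReal.rpow_add r 1 (by norm_num) (by norm_num), ENNReal.rpow_one]
          have e4 : (4:ℝ≥0∞) ^ r = (2:ℝ≥0∞) ^ (2 * r) := by
            rw [show (4:ℝ≥0∞) = (2:ℝ≥0∞) ^ (2:ℝ) by
                rw [show (2:ℝ) = ((2:ℕ):ℝ) by norm_num, ENNReal.rpow_natCast]; norm_num,
              ← ENNReal.rpow_mul]
          rw [e2, e4]
          exact ENNReal.rpow_le_rpow_of_exponent_le one_le_two (by linarith)
    calc (Kfun N0 N1 (t ^ r) f) ^ (1/r) ≤ ((4:ℝ≥0∞) ^ r * V ^ r) ^ (1/r) :=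
        ENNReal.rpow_le_rpow hmain (by positivity)
    _ = 4 * V := by
        rw [ENNReal.mul_rpow_of_nonneg _ _ (by positivity : (0:ℝ) ≤ 1/r),
          ern_rpow_rpow_inv hr0, ern_rpow_rpow_inv hr0]
  rw [mul_comm, ← ENNReal.div_le_iff_le_mul (Or.inl h4) (Or.inl h4')]
  refine le_iInf₂ fun g hg => ?_
  rw [ENNReal.div_le_iff_le_mul (Or.inl h4) (Or.inl h4'), mul_comm]
  exact key g hg

lemma div_bound {a b d e c1 c2 : ℝ≥0∞} (hc1 : c1 ≠ ∞) (hc20 : c2 ≠ 0) (hc2 : c2 ≠ ∞)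
    (ha : a ≤ c1 * b) (hd : d ≤ c2 * e) : a / e ≤ c1 * c2 * (b / d) := by
  have hinv : e⁻¹ ≤ c2 * d⁻¹ := by
    calc e⁻¹ = c2 * c2⁻¹ * e⁻¹ := by rw [ENNReal.mul_inv_cancel hc20 hc2, one_mul]
    _ = c2 * (c2 * e)⁻¹ := by
        rw [mul_assoc, ENNReal.mul_inv (Or.inl hc20) (Or.inl hc2)]
    _ ≤ c2 * d⁻¹ := mul_le_mul_right (ENNReal.inv_le_inv.mpr hd) c2
  calc a / e = a * e⁻¹ := rfl
  _ ≤ (c1 * b) * (c2 * d⁻¹) := mul_le_mul' ha hinv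
  _ = c1 * c2 * (b / d) := by rw [div_eq_mul_inv]; ring

end OrbitConvAux

/-- Lemma: for a `p`-convex quasi-Banach lattice couple, `0 < p ≤ 1`, and
`r ≥ 1/p`, the `r`-convexification of the K-orbit space of `x` coincides with
the K-orbit of `x` in the couple of `r`-convexifications, with equivalent
quasi-norms: `Orb^K(x; X₀, X₁)^{(r)} = Orb^K(x; X₀^{(r)}, X₁^{(r)})`. -/
theorem orbit_convexification (N0 N1 : (α → ℝ) → ℝ≥0∞)
    (C0 C1 M0 M1 : ℝ≥0∞) (p r : ℝ) (hp0 : 0 < p) (hp1 : p ≤ 1)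
    (h0 : IsLatticeQN N0 C0) (h1 : IsLatticeQN N1 C1)
    (hM0 : 1 ≤ M0 ∧ M0 < ∞) (hM1 : 1 ≤ M1 ∧ M1 < ∞)
    (hc0 : PConvex N0 p M0) (hc1 : PConvex N1 p M1)
    (hr : 1 / p ≤ r) (x : α → ℝ) (hx : x ≠ 0)
    (hxsum : Kfun N0 N1 1 x < ∞) :
    ∃ C : ℝ≥0∞, 1 ≤ C ∧ C < ∞ ∧ ∀ y : α → ℝ,
      (OrbN (Kfun N0 N1) x y) ^ (1 / r) ≤ C * OrbN (Kconv N0 N1 r) x y ∧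
      OrbN (Kconv N0 N1 r) x y ≤ C * (OrbN (Kfun N0 N1) x y) ^ (1 / r) := by
  
  have hr1 : 1 ≤ r := le_trans (by rw [le_div_iff₀ hp0, one_mul]; exact hp1) hr
  have hr0 : 0 < r := lt_of_lt_of_le one_pos hr1
  refine ⟨8, by norm_num, by norm_num, fun y => ⟨?_, ?_⟩⟩
  · have main : OrbN (Kfun N0 N1) x y ≤ (8 * OrbN (Kconv N0 N1 r) x y) ^ r := by
      rw [OrbN]
      refine iSup₂_le fun s hs => ?_
      set t : ℝ := s ^ (1/r) with htdef
      have ht : 0 < t := Real.rpow_pos_of_pos hs _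
      have hts : t ^ r = s := OrbitConvAux.real_rpow_inv_rpow hs.le hr0
      have hKy := OrbitConvAux.kfun_le_kconv N0 N1 h0 h1 hr1 ht y
      have hKx := OrbitConvAux.kconv_le_kfun N0 N1 h0 h1 hr1 ht x
      rw [hts] at hKy hKx
      have hdiv := OrbitConvAux.div_bound (c1 := 4) (c2 := 2)
        (by norm_num) (by norm_num) (by norm_num) hKy hKx
      have hle : Kconv N0 N1 r t y / Kconv N0 N1 r t x
          ≤ OrbN (Kconv N0 N1 r) x y := by
        rw [OrbN]
        exact le_iSup₂ (f := fun u (_ : 0 < u) => Kconv N0 N1 r u y / Kconv N0 N1 r u x) t ht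
      have hcomb : (Kfun N0 N1 s y / Kfun N0 N1 s x) ^ (1/r)
          ≤ 8 * OrbN (Kconv N0 N1 r) x y := by
        rw [ENNReal.div_rpow_of_nonneg _ _ (by positivity : (0:ℝ) ≤ 1/r)]
        calc (Kfun N0 N1 s y) ^ (1/r) / (Kfun N0 N1 s x) ^ (1/r)
            ≤ 4 * 2 * (Kconv N0 N1 r t y / Kconv N0 N1 r t x) := hdiv
        _ ≤ 8 * OrbN (Kconv N0 N1 r) x y := by
            rw [show (4:ℝ≥0∞) * 2 = 8 by norm_num]
            exact mul_le_mul_right hle 8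
      calc Kfun N0 N1 s y / Kfun N0 N1 s x
          = ((Kfun N0 N1 s y / Kfun N0 N1 s x) ^ (1/r)) ^ r :=
            (OrbitConvAux.ern_rpow_inv_rpow hr0 _).symm
      _ ≤ (8 * OrbN (Kconv N0 N1 r) x y) ^ r :=
            ENNReal.rpow_le_rpow hcomb hr0.le
    calc (OrbN (Kfun N0 N1) x y) ^ (1/r)
        ≤ ((8 * OrbN (Kconv N0 N1 r) x y) ^ r) ^ (1/r) :=
          ENNReal.rpow_le_rpow main (by positivity)
    _ = 8 * OrbN (Kconv N0 N1 r) x y := OrbitConvAux.ern_rpow_rpow_inv hr0 _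
  · rw [OrbN]
    refine iSup₂_le fun t ht => ?_
    have hKy := OrbitConvAux.kconv_le_kfun N0 N1 h0 h1 hr1 ht y
    have hKx := OrbitConvAux.kfun_le_kconv N0 N1 h0 h1 hr1 ht x
    have hdiv := OrbitConvAux.div_bound (c1 := 2) (c2 := 4)
      (by norm_num) (by norm_num) (by norm_num) hKy hKx
    have hle : Kfun N0 N1 (t ^ r) y / Kfun N0 N1 (t ^ r) x
        ≤ OrbN (Kfun N0 N1) x y := by
      rw [OrbN]
      exact le_iSup₂ (f := fun u (_ : 0 < u) => Kfun N0 N1 u y / Kfun N0 N1 u x) (t ^ r) (Real.rpow_pos_of_pos ht r)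
    calc Kconv N0 N1 r t y / Kconv N0 N1 r t x
        ≤ 2 * 4 * ((Kfun N0 N1 (t ^ r) y) ^ (1/r) / (Kfun N0 N1 (t ^ r) x) ^ (1/r)) := hdiv
    _ = 8 * (Kfun N0 N1 (t ^ r) y / Kfun N0 N1 (t ^ r) x) ^ (1/r) := by
        rw [← ENNReal.div_rpow_of_nonneg _ _ (by positivity : (0:ℝ) ≤ 1/r)]
        norm_num
    _ ≤ 8 * (OrbN (Kfun N0 N1) x y) ^ (1/r) :=
        mul_le_mul_right (ENNReal.rpow_le_rpow hle (by positivity)) 8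

end
end

section
/- Let $0 < \theta < 1$, $0 < p \leq \infty$, let $(X_0, X_1)$ be a $p$-convex quasi-Banach lattice couple, and let $r \geq \max(1/p,1)$. Then $(\overline{X}_{\theta,p})^{(r)} = (\overline{X^{(r)}})_{\theta, rp}$ with equivalent quasi-norms, where $\overline{X^{(r)}} = (X_0^{(r)}, X_1^{(r)})$. -/
open ENNReal Set MeasureTheory

noncomputable section

variable {α : Type*}

/-- `p`-convexity with constant `M`, for `0 < p ≤ ∞`. -/
def PConvexE (N : (α → ℝ) → ℝ≥0∞) (p : ℝ≥0∞) (M : ℝ≥0∞) : Prop :=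
  if p = ∞ then
    ∀ (n : ℕ) (x : Fin n → α → ℝ),
      N (fun s => ⨆ k, |x k s|) ≤ M * ⨆ k, N (x k)
  else
    ∀ (n : ℕ) (x : Fin n → α → ℝ),
      N (fun s => (∑ k, |x k s| ^ p.toReal) ^ (1 / p.toReal))
        ≤ M * (∑ k, (N (x k)) ^ p.toReal) ^ (1 / p.toReal)

/-- The Lions-Peetre quasi-norm built from a K-functional `K`. -/
def LPg {β : Type*} (K : ℝ → β → ℝ≥0∞) (θ : ℝ) (p : ℝ≥0∞) (x : β) : ℝ≥0∞ :=
  if p = ∞ then ⨆ (t : ℝ) (_ : 0 < t), ENNReal.ofReal (t ^ (-θ)) * K t x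
  else (∫⁻ t in Ioi (0 : ℝ),
      (ENNReal.ofReal (t ^ (-θ)) * K t x) ^ p.toReal
        / ENNReal.ofReal t) ^ (1 / p.toReal)

private lemma rpow_iInf_aux {ι : Sort*} (f : ι → ℝ≥0∞) {c : ℝ} (hc : 0 < c) :
    (⨅ i, f i) ^ c = ⨅ i, f i ^ c := by
  apply le_antisymm
  · exact le_iInf fun i => ENNReal.rpow_le_rpow (iInf_le f i) hc.le
  · have h : (⨅ i, f i ^ c) ^ (1 / c) ≤ ⨅ i, f i := by
      refine le_iInf fun i => ?_
      have := ENNReal.rpow_le_rpow (iInf_le (fun i => f i ^ c) i)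
        (by positivity : (0:ℝ) ≤ 1 / c)
      rwa [← ENNReal.rpow_mul, mul_one_div, div_self hc.ne', ENNReal.rpow_one] at this
    have := ENNReal.rpow_le_rpow h hc.le
    rwa [← ENNReal.rpow_mul, one_div_mul_cancel hc.ne', ENNReal.rpow_one] at this

private lemma rpow_iSup_aux {ι : Sort*} (f : ι → ℝ≥0∞) {c : ℝ} (hc : 0 < c) :
    (⨆ i, f i) ^ c = ⨆ i, f i ^ c := by
  apply le_antisymm
  · have h : (⨆ i, f i) ≤ (⨆ i, f i ^ c) ^ (1 / c) := by
      refine iSup_le fun i => ?_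
      have := ENNReal.rpow_le_rpow (le_iSup (fun i => f i ^ c) i)
        (by positivity : (0:ℝ) ≤ 1 / c)
      rwa [← ENNReal.rpow_mul, mul_one_div, div_self hc.ne', ENNReal.rpow_one] at this
    have := ENNReal.rpow_le_rpow h hc.le
    rwa [← ENNReal.rpow_mul, one_div_mul_cancel hc.ne', ENNReal.rpow_one] at this
  · exact iSup_le fun i => ENNReal.rpow_le_rpow (le_iSup f i) hc.le

private lemma rpow_iInf₂ {ι : Sort*} {P : ι → Prop} (F : ι → ℝ≥0∞) {c : ℝ} (hc : 0 < c) :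
    (⨅ (i) (_ : P i), F i) ^ c = ⨅ (i) (_ : P i), F i ^ c := by
  rw [rpow_iInf_aux _ hc]; exact iInf_congr fun i => rpow_iInf_aux _ hc

private lemma rpow_iSup₂ (F : ℝ → ℝ≥0∞) {c : ℝ} (hc : 0 < c) :
    (⨆ (t : ℝ) (_ : 0 < t), F t) ^ c = ⨆ (t : ℝ) (_ : 0 < t), F t ^ c := by
  rw [rpow_iSup_aux _ hc]; exact iSup_congr fun t => rpow_iSup_aux _ hc

private lemma mul_iInf₂ {ι : Sort*} {P : ι → Prop} (F : ι → ℝ≥0∞) {a : ℝ≥0∞}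
    (h0 : a ≠ 0) (ht : a ≠ ∞) :
    a * ⨅ (i) (_ : P i), F i = ⨅ (i) (_ : P i), a * F i := by
  rw [ENNReal.mul_iInf_of_ne h0 ht]; exact iInf_congr fun i => ENNReal.mul_iInf_of_ne h0 ht

private lemma iSup_rpow_reindex (φ : ℝ → ℝ≥0∞) {r : ℝ} (hr : 0 < r) :
    ⨆ (t : ℝ) (_ : 0 < t), φ (t ^ r) = ⨆ (u : ℝ) (_ : 0 < u), φ u := by
  apply le_antisymm
  · exact iSup₂_le fun t ht =>
      le_iSup₂ (f := fun (u : ℝ) (_ : 0 < u) => φ u) (t ^ r) (Real.rpow_pos_of_pos ht r)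
  · refine iSup₂_le fun u hu => ?_
    have h : (u ^ (1 / r)) ^ r = u := by
      rw [← Real.rpow_mul hu.le, one_div_mul_cancel hr.ne', Real.rpow_one]
    calc φ u = φ ((u ^ (1 / r)) ^ r) := by rw [h]
      _ ≤ _ := le_iSup₂ (f := fun (t : ℝ) (_ : 0 < t) => φ (t ^ r)) (u ^ (1 / r))
          (Real.rpow_pos_of_pos hu _)

private lemma lintegral_rpow_image_aux {r : ℝ} (hr : 0 < r) (g : ℝ → ℝ≥0∞) :
    ∫⁻ u in Ioi (0:ℝ), g u
      = ∫⁻ t in Ioi (0:ℝ), ENNReal.ofReal |r * t ^ (r - 1)| * g (t ^ r) := by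
  have himg : (fun t : ℝ => t ^ r) '' Ioi 0 = Ioi 0 := by
    apply Subset.antisymm
    · rintro _ ⟨t, ht, rfl⟩
      exact Real.rpow_pos_of_pos ht r
    · intro u hu
      exact ⟨u ^ (1 / r), Real.rpow_pos_of_pos hu _,
        by show (u ^ (1 / r)) ^ r = u; rw [← Real.rpow_mul hu.le, one_div_mul_cancel hr.ne', Real.rpow_one]⟩
  have hderiv : ∀ t ∈ Ioi (0:ℝ),
      HasDerivWithinAt (fun t : ℝ => t ^ r) (r * t ^ (r - 1)) (Ioi 0) t := fun t ht =>
    (Real.hasDerivAt_rpow_const (Or.inl (ne_of_gt ht))).hasDerivWithinAt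
  have hinj : InjOn (fun t : ℝ => t ^ r) (Ioi 0) := by
    intro a ha b hb hab
    simp only at hab
    rcases lt_trichotomy a b with h | h | h
    · exact absurd hab (ne_of_lt (Real.rpow_lt_rpow (le_of_lt ha) h hr))
    · exact h
    · exact absurd hab.symm (ne_of_lt (Real.rpow_lt_rpow (le_of_lt hb) h hr))
  calc ∫⁻ u in Ioi (0:ℝ), g u = ∫⁻ u in (fun t : ℝ => t ^ r) '' Ioi 0, g u := by rw [himg]
    _ = _ := by
      simpa only [ContinuousLinearMap.det_toSpanSingleton] using
        lintegral_image_eq_lintegral_abs_det_fderiv_mul volume measurableSet_Ioi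
          (fun x hx => (hderiv x hx).hasFDerivWithinAt) hinj g

lemma Kconv_le_aux (N0 N1 : (α → ℝ) → ℝ≥0∞)
    (hmono0 : ∀ u v : α → ℝ, (∀ s, |u s| ≤ |v s|) → N0 u ≤ N0 v)
    (hmono1 : ∀ u v : α → ℝ, (∀ s, |u s| ≤ |v s|) → N1 u ≤ N1 v)
    {r : ℝ} (hr1 : 1 ≤ r) {t : ℝ} (ht : 0 < t) (f : α → ℝ) :
    Kconv N0 N1 r t f ≤ 2 * Kfun N0 N1 (t ^ r) f ^ (1 / r) := by
  have hr0 : 0 < r := lt_of_lt_of_le one_pos hr1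
  have h1r : (0:ℝ) < 1 / r := by positivity
  rw [Kfun, rpow_iInf₂ _ h1r, mul_iInf₂ _ two_ne_zero ENNReal.ofNat_ne_top]
  refine le_iInf₂ fun y hy => ?_
  have hfS : ∀ s, |f s| ≤ |y.1 s| + |y.2 s| := fun s => by
    rw [hy]; exact abs_add_le _ _
  set g1 : α → ℝ := fun s =>
    if |y.1 s| + |y.2 s| = 0 then 0 else |f s| * (|y.1 s| / (|y.1 s| + |y.2 s|)) ^ r with hg1
  set g2 : α → ℝ := fun s =>
    if |y.1 s| + |y.2 s| = 0 then 0 else |f s| * (|y.2 s| / (|y.1 s| + |y.2 s|)) ^ r with hg2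
  have hadm : ∀ s, 0 ≤ g1 s ∧ 0 ≤ g2 s ∧
      |f s| = (g1 s ^ (1 / r) + g2 s ^ (1 / r)) ^ r := by
    intro s
    by_cases h : |y.1 s| + |y.2 s| = 0
    · have hf0 : |f s| = 0 := le_antisymm (h ▸ hfS s) (abs_nonneg _)
      simp only [hg1, hg2, if_pos h]
      refine ⟨le_refl 0, le_refl 0, ?_⟩
      rw [Real.zero_rpow (ne_of_gt h1r), add_zero, Real.zero_rpow hr0.ne', hf0]
    · have hSpos : 0 < |y.1 s| + |y.2 s| :=
        lt_of_le_of_ne (by positivity) (Ne.symm h)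
      simp only [hg1, hg2, if_neg h]
      refine ⟨by positivity, by positivity, ?_⟩
      have e : ∀ a : ℝ, 0 ≤ a →
          (|f s| * (a / (|y.1 s| + |y.2 s|)) ^ r) ^ (1 / r)
            = |f s| ^ (1 / r) * (a / (|y.1 s| + |y.2 s|)) := by
        intro a ha
        rw [Real.mul_rpow (abs_nonneg _) (Real.rpow_nonneg (by positivity) _),
          ← Real.rpow_mul (by positivity), mul_one_div, div_self hr0.ne', Real.rpow_one]
      rw [e _ (abs_nonneg _), e _ (abs_nonneg _), ← mul_add, ← add_div,
        div_self h, mul_one, ← Real.rpow_mul (abs_nonneg _),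
        one_div_mul_cancel hr0.ne', Real.rpow_one]
  refine le_trans (iInf₂_le (⟨g1, g2⟩ : (α → ℝ) × (α → ℝ)) hadm) ?_
  have hdom : ∀ (y0 : α → ℝ) (gg : α → ℝ), (gg = fun s =>
      if |y.1 s| + |y.2 s| = 0 then 0 else |f s| * (|y0 s| / (|y.1 s| + |y.2 s|)) ^ r) →
      (∀ s, |y0 s| ≤ |y.1 s| + |y.2 s|) → ∀ s, |gg s| ≤ |y0 s| := by
    rintro y0 gg rfl hle s
    by_cases h : |y.1 s| + |y.2 s| = 0
    · simp [h]
    · have hSpos : 0 < |y.1 s| + |y.2 s| := lt_of_le_of_ne (by positivity) (Ne.symm h)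
      simp only [if_neg h]
      set qq : ℝ := |y0 s| / (|y.1 s| + |y.2 s|) with hqq
      have hq0 : 0 ≤ qq := by positivity
      have hq1 : qq ≤ 1 := div_le_one_of_le₀ (hle s) hSpos.le
      have hqr : qq ^ r ≤ qq := by
        rcases eq_or_lt_of_le hq0 with hq | hq
        · rw [← hq, Real.zero_rpow hr0.ne']
        · have := Real.rpow_le_rpow_of_exponent_ge hq hq1 hr1
          rwa [Real.rpow_one] at this
      rw [abs_of_nonneg (by positivity)]
      calc |f s| * qq ^ r ≤ (|y.1 s| + |y.2 s|) * qq :=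
            mul_le_mul (hfS s) hqr (by positivity) hSpos.le
        _ = |y0 s| := by rw [hqq, mul_comm, div_mul_cancel₀ _ h]
  have hb1 : N0 g1 ≤ N0 y.1 :=
    hmono0 _ _ (hdom y.1 g1 hg1 fun s => le_add_of_nonneg_right (abs_nonneg _))
  have hb2 : N1 g2 ≤ N1 y.2 :=
    hmono1 _ _ (hdom y.2 g2 hg2 fun s => le_add_of_nonneg_left (abs_nonneg _))
  have hT : ENNReal.ofReal t = (ENNReal.ofReal (t ^ r)) ^ (1 / r) := by
    rw [ENNReal.ofReal_rpow_of_pos (Real.rpow_pos_of_pos ht r),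
      ← Real.rpow_mul ht.le, mul_one_div, div_self hr0.ne', Real.rpow_one]
  have h1 : N0 g1 ^ (1 / r)
      ≤ (N0 y.1 + ENNReal.ofReal (t ^ r) * N1 y.2) ^ (1 / r) :=
    ENNReal.rpow_le_rpow (hb1.trans le_self_add) h1r.le
  have h2 : ENNReal.ofReal t * N1 g2 ^ (1 / r)
      ≤ (N0 y.1 + ENNReal.ofReal (t ^ r) * N1 y.2) ^ (1 / r) := by
    rw [hT, ← ENNReal.mul_rpow_of_nonneg _ _ h1r.le]
    exact ENNReal.rpow_le_rpow ((mul_le_mul_right hb2 _).trans le_add_self) h1r.le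
  calc N0 g1 ^ (1 / r) + ENNReal.ofReal t * N1 g2 ^ (1 / r)
      ≤ (N0 y.1 + ENNReal.ofReal (t ^ r) * N1 y.2) ^ (1 / r)
        + (N0 y.1 + ENNReal.ofReal (t ^ r) * N1 y.2) ^ (1 / r) := add_le_add h1 h2
    _ = 2 * (N0 y.1 + ENNReal.ofReal (t ^ r) * N1 y.2) ^ (1 / r) := (two_mul _).symm

lemma Kfun_le_aux (N0 N1 : (α → ℝ) → ℝ≥0∞)
    (hhom0 : ∀ (c : ℝ) (u : α → ℝ), N0 (c • u) = ENNReal.ofReal |c| * N0 u)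
    (hhom1 : ∀ (c : ℝ) (u : α → ℝ), N1 (c • u) = ENNReal.ofReal |c| * N1 u)
    (hmono0 : ∀ u v : α → ℝ, (∀ s, |u s| ≤ |v s|) → N0 u ≤ N0 v)
    (hmono1 : ∀ u v : α → ℝ, (∀ s, |u s| ≤ |v s|) → N1 u ≤ N1 v)
    {r : ℝ} (hr1 : 1 ≤ r) {t : ℝ} (ht : 0 < t) (f : α → ℝ) :
    Kfun N0 N1 (t ^ r) f ^ (1 / r) ≤ 2 * Kconv N0 N1 r t f := by
  have hr0 : 0 < r := lt_of_lt_of_le one_pos hr1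
  have h1r : (0:ℝ) < 1 / r := by positivity
  have h1r1 : 1 / r ≤ 1 := by rw [div_le_one hr0]; exact hr1
  rw [Kconv, mul_iInf₂ _ two_ne_zero ENNReal.ofNat_ne_top]
  refine le_iInf₂ fun g hg => ?_
  have hS0 : ∀ s, 0 ≤ g.1 s + g.2 s := fun s => add_nonneg (hg s).1 (hg s).2.1
  have hfS : ∀ s, |f s| ≤ 2 ^ r * (g.1 s + g.2 s) := by
    intro s
    have h1 : g.1 s ^ (1 / r) ≤ (g.1 s + g.2 s) ^ (1 / r) :=
      Real.rpow_le_rpow (hg s).1 (le_add_of_nonneg_right (hg s).2.1) h1r.le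
    have h2 : g.2 s ^ (1 / r) ≤ (g.1 s + g.2 s) ^ (1 / r) :=
      Real.rpow_le_rpow (hg s).2.1 (le_add_of_nonneg_left (hg s).1) h1r.le
    rw [(hg s).2.2]
    calc (g.1 s ^ (1 / r) + g.2 s ^ (1 / r)) ^ r
        ≤ (2 * (g.1 s + g.2 s) ^ (1 / r)) ^ r := by
          refine Real.rpow_le_rpow (add_nonneg (Real.rpow_nonneg (hg s).1 _) (Real.rpow_nonneg (hg s).2.1 _)) ?_ hr0.le
          calc g.1 s ^ (1 / r) + g.2 s ^ (1 / r)
              ≤ (g.1 s + g.2 s) ^ (1 / r) + (g.1 s + g.2 s) ^ (1 / r) := add_le_add h1 h2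
            _ = 2 * (g.1 s + g.2 s) ^ (1 / r) := (two_mul _).symm
      _ = 2 ^ r * (g.1 s + g.2 s) := by
          rw [Real.mul_rpow (by norm_num) (Real.rpow_nonneg (hS0 s) _),
            ← Real.rpow_mul (hS0 s), one_div_mul_cancel hr0.ne', Real.rpow_one]
  set y1 : α → ℝ := fun s => if g.1 s + g.2 s = 0 then 0 else f s * g.1 s / (g.1 s + g.2 s)
    with hy1
  set y2 : α → ℝ := fun s => if g.1 s + g.2 s = 0 then 0 else f s * g.2 s / (g.1 s + g.2 s)
    with hy2
  have hf0 : ∀ s, g.1 s + g.2 s = 0 → f s = 0 := by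
    intro s h
    have hz := (add_eq_zero_iff_of_nonneg (hg s).1 (hg s).2.1).mp h
    have : |f s| = 0 := by
      rw [(hg s).2.2, hz.1, hz.2, Real.zero_rpow (ne_of_gt h1r), add_zero,
        Real.zero_rpow hr0.ne']
    exact abs_eq_zero.mp this
  have hy : f = y1 + y2 := by
    funext s
    by_cases h : g.1 s + g.2 s = 0
    · simp [hy1, hy2, h, hf0 s h]
    · simp only [Pi.add_apply, hy1, hy2, if_neg h]
      field_simp
  have hdom : ∀ (gg yy : α → ℝ), (yy = fun s =>
      if g.1 s + g.2 s = 0 then 0 else f s * gg s / (g.1 s + g.2 s)) →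
      (∀ s, 0 ≤ gg s) → ∀ s, |yy s| ≤ |((2:ℝ) ^ r • gg) s| := by
    rintro gg yy rfl hgg s
    simp only [Pi.smul_apply, smul_eq_mul]
    by_cases h : g.1 s + g.2 s = 0
    · simp only [if_pos h, abs_zero]
      positivity
    · have hSpos : 0 < g.1 s + g.2 s := lt_of_le_of_ne (hS0 s) (Ne.symm h)
      simp only [if_neg h]
      rw [abs_div, abs_mul, abs_of_nonneg (hgg s), abs_of_pos hSpos,
        abs_of_nonneg (mul_nonneg (Real.rpow_pos_of_pos two_pos r).le (hgg s))]
      rw [div_le_iff₀ hSpos]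
      calc |f s| * gg s ≤ 2 ^ r * (g.1 s + g.2 s) * gg s :=
            mul_le_mul_of_nonneg_right (hfS s) (hgg s)
        _ = 2 ^ r * gg s * (g.1 s + g.2 s) := by ring
  have hb1 : N0 y1 ≤ ENNReal.ofReal (2 ^ r) * N0 g.1 := by
    calc N0 y1 ≤ N0 ((2:ℝ) ^ r • g.1) := hmono0 _ _ (hdom g.1 y1 hy1 fun s => (hg s).1)
      _ = ENNReal.ofReal |(2:ℝ) ^ r| * N0 g.1 := hhom0 _ _
      _ = ENNReal.ofReal (2 ^ r) * N0 g.1 := by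
          rw [abs_of_pos (Real.rpow_pos_of_pos two_pos r)]
  have hb2 : N1 y2 ≤ ENNReal.ofReal (2 ^ r) * N1 g.2 := by
    calc N1 y2 ≤ N1 ((2:ℝ) ^ r • g.2) := hmono1 _ _ (hdom g.2 y2 hy2 fun s => (hg s).2.1)
      _ = ENNReal.ofReal |(2:ℝ) ^ r| * N1 g.2 := hhom1 _ _
      _ = ENNReal.ofReal (2 ^ r) * N1 g.2 := by
          rw [abs_of_pos (Real.rpow_pos_of_pos two_pos r)]
  have hK : Kfun N0 N1 (t ^ r) f
      ≤ ENNReal.ofReal (2 ^ r) * (N0 g.1 + ENNReal.ofReal (t ^ r) * N1 g.2) := by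
    refine (iInf₂_le (⟨y1, y2⟩ : (α → ℝ) × (α → ℝ)) hy).trans ?_
    rw [mul_add]
    refine add_le_add hb1 ?_
    rw [mul_left_comm]
    exact mul_le_mul_right hb2 _
  have h2r : (ENNReal.ofReal ((2:ℝ) ^ r)) ^ (1 / r) = 2 := by
    rw [ENNReal.ofReal_rpow_of_pos (Real.rpow_pos_of_pos two_pos r),
      ← Real.rpow_mul (by norm_num : (0:ℝ) ≤ 2), mul_one_div, div_self hr0.ne',
      Real.rpow_one, ENNReal.ofReal_ofNat]
  have hT : (ENNReal.ofReal (t ^ r)) ^ (1 / r) = ENNReal.ofReal t := by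
    rw [ENNReal.ofReal_rpow_of_pos (Real.rpow_pos_of_pos ht r),
      ← Real.rpow_mul ht.le, mul_one_div, div_self hr0.ne', Real.rpow_one]
  calc Kfun N0 N1 (t ^ r) f ^ (1 / r)
      ≤ (ENNReal.ofReal (2 ^ r) * (N0 g.1 + ENNReal.ofReal (t ^ r) * N1 g.2)) ^ (1 / r) :=
        ENNReal.rpow_le_rpow hK h1r.le
    _ = 2 * (N0 g.1 + ENNReal.ofReal (t ^ r) * N1 g.2) ^ (1 / r) := by
        rw [ENNReal.mul_rpow_of_nonneg _ _ h1r.le, h2r]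
    _ ≤ 2 * (N0 g.1 ^ (1 / r) + ENNReal.ofReal t * N1 g.2 ^ (1 / r)) := by
        refine mul_le_mul_right ?_ 2
        refine (ENNReal.rpow_add_le_add_rpow _ _ h1r.le h1r1).trans ?_
        rw [ENNReal.mul_rpow_of_nonneg _ _ h1r.le, hT]

private lemma LPg_top {β : Type*} (K : ℝ → β → ℝ≥0∞) (θ : ℝ) (x : β) :
    LPg K θ ∞ x = ⨆ (t : ℝ) (_ : 0 < t), ENNReal.ofReal (t ^ (-θ)) * K t x := if_pos rfl

private lemma LPg_ne_top {β : Type*} (K : ℝ → β → ℝ≥0∞) (θ : ℝ) {p : ℝ≥0∞} (x : β)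
    (hp : p ≠ ∞) :
    LPg K θ p x = (∫⁻ t in Ioi (0 : ℝ),
      (ENNReal.ofReal (t ^ (-θ)) * K t x) ^ p.toReal / ENNReal.ofReal t) ^ (1 / p.toReal) :=
  if_neg hp

/-- Lemma: for `0 < θ < 1`, `0 < p ≤ ∞`, a `p`-convex quasi-Banach lattice
couple `(X₀, X₁)`, and `r ≥ max (1/p) 1`, one has
`(X̄_{θ,p})^{(r)} = (X̄^{(r)})_{θ, rp}` with equivalent quasi-norms (the
quasi-norm of `Y^{(r)}` being `‖·‖_Y^{1/r}`). -/
theorem LP_convexification (N0 N1 : (α → ℝ) → ℝ≥0∞)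
    (C0 C1 M0 M1 : ℝ≥0∞) (θ : ℝ) (p : ℝ≥0∞) (r : ℝ)
    (hθ : 0 < θ ∧ θ < 1) (hp : 0 < p)
    (h0 : IsLatticeQN N0 C0) (h1 : IsLatticeQN N1 C1)
    (hM0 : 1 ≤ M0 ∧ M0 < ∞) (hM1 : 1 ≤ M1 ∧ M1 < ∞)
    (hc0 : PConvexE N0 p M0) (hc1 : PConvexE N1 p M1)
    (hr1 : 1 ≤ r) (hrp : 1 ≤ ENNReal.ofReal r * p) :
    ∃ C : ℝ≥0∞, 1 ≤ C ∧ C < ∞ ∧ ∀ f : α → ℝ,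
      (LPg (Kfun N0 N1) θ p f) ^ (1 / r)
          ≤ C * LPg (Kconv N0 N1 r) θ (ENNReal.ofReal r * p) f ∧
      LPg (Kconv N0 N1 r) θ (ENNReal.ofReal r * p) f
          ≤ C * (LPg (Kfun N0 N1) θ p f) ^ (1 / r) := by
  obtain ⟨-, -, -, hhom0, -, hmono0⟩ := h0
  obtain ⟨-, -, -, hhom1, -, hmono1⟩ := h1
  have hr0 : 0 < r := lt_of_lt_of_le one_pos hr1
  have h1r : (0:ℝ) < 1 / r := by positivity
  have hC2 : (2:ℝ≥0∞) ≤ 2 * ENNReal.ofReal r := by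
    calc (2:ℝ≥0∞) = 2 * 1 := (mul_one 2).symm
      _ ≤ 2 * ENNReal.ofReal r := mul_le_mul_right (ENNReal.one_le_ofReal.mpr hr1) 2
  refine ⟨2 * ENNReal.ofReal r, one_le_two.trans hC2,
    ENNReal.mul_lt_top (by norm_num) ENNReal.ofReal_lt_top, fun f => ?_⟩
  have hcompA : ∀ t : ℝ, 0 < t →
      Kconv N0 N1 r t f ≤ 2 * Kfun N0 N1 (t ^ r) f ^ (1 / r) := fun t ht =>
    Kconv_le_aux N0 N1 hmono0 hmono1 hr1 ht f
  have hcompB : ∀ t : ℝ, 0 < t →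
      Kfun N0 N1 (t ^ r) f ^ (1 / r) ≤ 2 * Kconv N0 N1 r t f := fun t ht =>
    Kfun_le_aux N0 N1 hhom0 hhom1 hmono0 hmono1 hr1 ht f
  have hw : ∀ t : ℝ, 0 < t →
      (ENNReal.ofReal ((t ^ r) ^ (-θ)) * Kfun N0 N1 (t ^ r) f) ^ (1 / r)
        = ENNReal.ofReal (t ^ (-θ)) * Kfun N0 N1 (t ^ r) f ^ (1 / r) := by
    intro t htp
    rw [ENNReal.mul_rpow_of_nonneg _ _ h1r.le]
    congr 1
    rw [ENNReal.ofReal_rpow_of_pos (Real.rpow_pos_of_pos (Real.rpow_pos_of_pos htp r) _)]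
    congr 1
    rw [← Real.rpow_mul htp.le, ← Real.rpow_mul htp.le]
    congr 1
    rw [mul_one_div, mul_comm r (-θ), mul_div_assoc, div_self hr0.ne', mul_one]
  rcases eq_or_ne p ∞ with rfl | hpi
  · -- sup case
    have htop : ENNReal.ofReal r * ⊤ = ⊤ := ENNReal.mul_top (ENNReal.ofReal_pos.mpr hr0).ne'
    rw [htop, LPg_top, LPg_top]
    have hre : (⨆ (t : ℝ) (_ : 0 < t),
          (ENNReal.ofReal ((t ^ r) ^ (-θ)) * Kfun N0 N1 (t ^ r) f) ^ (1 / r))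
        = ⨆ (u : ℝ) (_ : 0 < u),
          (ENNReal.ofReal (u ^ (-θ)) * Kfun N0 N1 u f) ^ (1 / r) :=
      iSup_rpow_reindex (fun u => (ENNReal.ofReal (u ^ (-θ)) * Kfun N0 N1 u f) ^ (1 / r)) hr0
    have hpow : (⨆ (t : ℝ) (_ : 0 < t), ENNReal.ofReal (t ^ (-θ)) * Kfun N0 N1 t f) ^ (1 / r)
        = ⨆ (t : ℝ) (_ : 0 < t), (ENNReal.ofReal (t ^ (-θ)) * Kfun N0 N1 t f) ^ (1 / r) :=
      rpow_iSup₂ (fun t => ENNReal.ofReal (t ^ (-θ)) * Kfun N0 N1 t f) h1r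
    rw [hpow, ← hre]
    constructor
    · refine iSup₂_le fun t htp => ?_
      rw [hw t htp]
      calc ENNReal.ofReal (t ^ (-θ)) * Kfun N0 N1 (t ^ r) f ^ (1 / r)
          ≤ ENNReal.ofReal (t ^ (-θ)) * (2 * Kconv N0 N1 r t f) :=
            mul_le_mul_right (hcompB t htp) _
        _ = 2 * (ENNReal.ofReal (t ^ (-θ)) * Kconv N0 N1 r t f) := by ring
        _ ≤ 2 * ⨆ (t : ℝ) (_ : 0 < t), ENNReal.ofReal (t ^ (-θ)) * Kconv N0 N1 r t f :=
            mul_le_mul_right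
              (le_iSup₂ (f := fun (t : ℝ) (_ : 0 < t) =>
                ENNReal.ofReal (t ^ (-θ)) * Kconv N0 N1 r t f) t htp) 2
        _ ≤ (2 * ENNReal.ofReal r) *
              ⨆ (t : ℝ) (_ : 0 < t), ENNReal.ofReal (t ^ (-θ)) * Kconv N0 N1 r t f :=
            mul_le_mul_left hC2 _
    · refine iSup₂_le fun t htp => ?_
      calc ENNReal.ofReal (t ^ (-θ)) * Kconv N0 N1 r t f
          ≤ ENNReal.ofReal (t ^ (-θ)) * (2 * Kfun N0 N1 (t ^ r) f ^ (1 / r)) :=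
            mul_le_mul_right (hcompA t htp) _
        _ = 2 * (ENNReal.ofReal (t ^ (-θ)) * Kfun N0 N1 (t ^ r) f ^ (1 / r)) := by ring
        _ = 2 * (ENNReal.ofReal ((t ^ r) ^ (-θ)) * Kfun N0 N1 (t ^ r) f) ^ (1 / r) := by
            rw [hw t htp]
        _ ≤ 2 * ⨆ (t : ℝ) (_ : 0 < t),
              (ENNReal.ofReal ((t ^ r) ^ (-θ)) * Kfun N0 N1 (t ^ r) f) ^ (1 / r) :=
            mul_le_mul_right
              (le_iSup₂ (f := fun (t : ℝ) (_ : 0 < t) =>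
                (ENNReal.ofReal ((t ^ r) ^ (-θ)) * Kfun N0 N1 (t ^ r) f) ^ (1 / r)) t htp) 2
        _ ≤ (2 * ENNReal.ofReal r) * ⨆ (t : ℝ) (_ : 0 < t),
              (ENNReal.ofReal ((t ^ r) ^ (-θ)) * Kfun N0 N1 (t ^ r) f) ^ (1 / r) :=
            mul_le_mul_left hC2 _
  · -- integral case
    have hq0 : 0 < p.toReal := ENNReal.toReal_pos hp.ne' hpi
    have hrpne : ENNReal.ofReal r * p ≠ ⊤ := ENNReal.mul_ne_top ENNReal.ofReal_ne_top hpi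
    have hrpq : (ENNReal.ofReal r * p).toReal = r * p.toReal := by
      rw [ENNReal.toReal_mul, ENNReal.toReal_ofReal hr0.le]
    have hrq0 : 0 < r * p.toReal := by positivity
    have hrq1 : 1 ≤ r * p.toReal := by
      have h := ENNReal.toReal_mono hrpne hrp
      rwa [ENNReal.toReal_one, hrpq] at h
    rw [LPg_ne_top _ _ _ hpi, LPg_ne_top _ _ _ hrpne, hrpq]
    set I : ℝ≥0∞ := ∫⁻ t in Ioi (0:ℝ),
      (ENNReal.ofReal (t ^ (-θ)) * Kfun N0 N1 t f) ^ p.toReal / ENNReal.ofReal t with hIdef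
    set Ic : ℝ≥0∞ := ∫⁻ t in Ioi (0:ℝ),
      (ENNReal.ofReal (t ^ (-θ)) * Kconv N0 N1 r t f) ^ (r * p.toReal) / ENNReal.ofReal t
      with hIcdef
    set J : ℝ≥0∞ := ∫⁻ t in Ioi (0:ℝ),
      (ENNReal.ofReal ((t ^ r) ^ (-θ)) * Kfun N0 N1 (t ^ r) f) ^ p.toReal / ENNReal.ofReal t
      with hJdef
    have e1 : ∀ t : ℝ,
        ((ENNReal.ofReal ((t ^ r) ^ (-θ)) * Kfun N0 N1 (t ^ r) f) ^ (1 / r)) ^ (r * p.toReal)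
          = (ENNReal.ofReal ((t ^ r) ^ (-θ)) * Kfun N0 N1 (t ^ r) f) ^ p.toReal := by
      intro t
      rw [← ENNReal.rpow_mul]
      congr 1
      field_simp
    have hIJ : I = ENNReal.ofReal r * J := by
      rw [hIdef, hJdef]
      have hcov : (∫⁻ u in Ioi (0:ℝ),
            (ENNReal.ofReal (u ^ (-θ)) * Kfun N0 N1 u f) ^ p.toReal / ENNReal.ofReal u)
          = ∫⁻ t in Ioi (0:ℝ), ENNReal.ofReal |r * t ^ (r - 1)| *
            ((ENNReal.ofReal ((t ^ r) ^ (-θ)) * Kfun N0 N1 (t ^ r) f) ^ p.toReal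
              / ENNReal.ofReal (t ^ r)) :=
        lintegral_rpow_image_aux hr0 _
      rw [hcov, ← lintegral_const_mul' _ _ ENNReal.ofReal_ne_top]
      refine setLIntegral_congr_fun measurableSet_Ioi (fun t htp => ?_)
      have habs : |r * t ^ (r - 1)| = r * t ^ (r - 1) :=
        abs_of_pos (mul_pos hr0 (Real.rpow_pos_of_pos htp _))
      have h3 : ENNReal.ofReal (t ^ r) = ENNReal.ofReal (t ^ (r - 1)) * ENNReal.ofReal t := by
        rw [← ENNReal.ofReal_mul (Real.rpow_pos_of_pos htp _).le,
          ← Real.rpow_add_one (ne_of_gt htp) (r - 1), sub_add_cancel]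
      have hcan : ENNReal.ofReal (t ^ (r - 1)) * (ENNReal.ofReal (t ^ (r - 1)))⁻¹ = 1 :=
        ENNReal.mul_inv_cancel (ENNReal.ofReal_pos.mpr (Real.rpow_pos_of_pos htp _)).ne'
          ENNReal.ofReal_ne_top
      rw [habs, ENNReal.ofReal_mul hr0.le, h3, div_eq_mul_inv, div_eq_mul_inv,
        ENNReal.mul_inv (Or.inl (ENNReal.ofReal_pos.mpr (Real.rpow_pos_of_pos htp _)).ne')
          (Or.inl ENNReal.ofReal_ne_top)]
      calc (ENNReal.ofReal r * ENNReal.ofReal (t ^ (r - 1))) *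
            ((ENNReal.ofReal ((t ^ r) ^ (-θ)) * Kfun N0 N1 (t ^ r) f) ^ p.toReal *
              ((ENNReal.ofReal (t ^ (r - 1)))⁻¹ * (ENNReal.ofReal t)⁻¹))
          = (ENNReal.ofReal (t ^ (r - 1)) * (ENNReal.ofReal (t ^ (r - 1)))⁻¹) *
            (ENNReal.ofReal r *
              ((ENNReal.ofReal ((t ^ r) ^ (-θ)) * Kfun N0 N1 (t ^ r) f) ^ p.toReal *
                (ENNReal.ofReal t)⁻¹)) := by ring
        _ = ENNReal.ofReal r *
            ((ENNReal.ofReal ((t ^ r) ^ (-θ)) * Kfun N0 N1 (t ^ r) f) ^ p.toReal *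
              (ENNReal.ofReal t)⁻¹) := by rw [hcan, one_mul]
    have hIcJ : Ic ≤ 2 ^ (r * p.toReal) * J := by
      rw [hIcdef, hJdef,
        ← lintegral_const_mul' _ _ (ENNReal.rpow_ne_top_of_nonneg hrq0.le ENNReal.ofNat_ne_top)]
      refine setLIntegral_mono' measurableSet_Ioi fun t htp => ?_
      have hstep : ENNReal.ofReal (t ^ (-θ)) * Kconv N0 N1 r t f
          ≤ 2 * (ENNReal.ofReal ((t ^ r) ^ (-θ)) * Kfun N0 N1 (t ^ r) f) ^ (1 / r) := by
        rw [hw t htp]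
        calc ENNReal.ofReal (t ^ (-θ)) * Kconv N0 N1 r t f
            ≤ ENNReal.ofReal (t ^ (-θ)) * (2 * Kfun N0 N1 (t ^ r) f ^ (1 / r)) :=
              mul_le_mul_right (hcompA t htp) _
          _ = 2 * (ENNReal.ofReal (t ^ (-θ)) * Kfun N0 N1 (t ^ r) f ^ (1 / r)) := by ring
      calc (ENNReal.ofReal (t ^ (-θ)) * Kconv N0 N1 r t f) ^ (r * p.toReal) / ENNReal.ofReal t
          ≤ (2 * (ENNReal.ofReal ((t ^ r) ^ (-θ)) * Kfun N0 N1 (t ^ r) f) ^ (1 / r))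
              ^ (r * p.toReal) / ENNReal.ofReal t :=
            ENNReal.div_le_div_right (ENNReal.rpow_le_rpow hstep hrq0.le) _
        _ = 2 ^ (r * p.toReal) *
            ((ENNReal.ofReal ((t ^ r) ^ (-θ)) * Kfun N0 N1 (t ^ r) f) ^ p.toReal
              / ENNReal.ofReal t) := by
            rw [ENNReal.mul_rpow_of_nonneg _ _ hrq0.le, e1 t, mul_div_assoc]
    have hJIc : J ≤ 2 ^ (r * p.toReal) * Ic := by
      rw [hJdef, hIcdef,
        ← lintegral_const_mul' _ _ (ENNReal.rpow_ne_top_of_nonneg hrq0.le ENNReal.ofNat_ne_top)]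
      refine setLIntegral_mono' measurableSet_Ioi fun t htp => ?_
      have hstep : (ENNReal.ofReal ((t ^ r) ^ (-θ)) * Kfun N0 N1 (t ^ r) f) ^ (1 / r)
          ≤ 2 * (ENNReal.ofReal (t ^ (-θ)) * Kconv N0 N1 r t f) := by
        rw [hw t htp]
        calc ENNReal.ofReal (t ^ (-θ)) * Kfun N0 N1 (t ^ r) f ^ (1 / r)
            ≤ ENNReal.ofReal (t ^ (-θ)) * (2 * Kconv N0 N1 r t f) :=
              mul_le_mul_right (hcompB t htp) _
          _ = 2 * (ENNReal.ofReal (t ^ (-θ)) * Kconv N0 N1 r t f) := by ring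
      calc (ENNReal.ofReal ((t ^ r) ^ (-θ)) * Kfun N0 N1 (t ^ r) f) ^ p.toReal
              / ENNReal.ofReal t
          = ((ENNReal.ofReal ((t ^ r) ^ (-θ)) * Kfun N0 N1 (t ^ r) f) ^ (1 / r))
              ^ (r * p.toReal) / ENNReal.ofReal t := by rw [e1 t]
        _ ≤ (2 * (ENNReal.ofReal (t ^ (-θ)) * Kconv N0 N1 r t f)) ^ (r * p.toReal)
              / ENNReal.ofReal t :=
            ENNReal.div_le_div_right (ENNReal.rpow_le_rpow hstep hrq0.le) _
        _ = 2 ^ (r * p.toReal) *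
            ((ENNReal.ofReal (t ^ (-θ)) * Kconv N0 N1 r t f) ^ (r * p.toReal)
              / ENNReal.ofReal t) := by
            rw [ENNReal.mul_rpow_of_nonneg _ _ hrq0.le, mul_div_assoc]
    have hexp : 1 / p.toReal * (1 / r) = 1 / (r * p.toReal) := by
      rw [div_mul_div_comm, one_mul, mul_comm]
    constructor
    · rw [← ENNReal.rpow_mul, hexp]
      have hIle : I ≤ ENNReal.ofReal r * (2 ^ (r * p.toReal) * Ic) := by
        rw [hIJ]; exact mul_le_mul_right hJIc _
      calc I ^ (1 / (r * p.toReal))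
          ≤ (ENNReal.ofReal r * (2 ^ (r * p.toReal) * Ic)) ^ (1 / (r * p.toReal)) :=
            ENNReal.rpow_le_rpow hIle (by positivity)
        _ = (ENNReal.ofReal r) ^ (1 / (r * p.toReal)) *
            ((2 ^ (r * p.toReal)) ^ (1 / (r * p.toReal)) * Ic ^ (1 / (r * p.toReal))) := by
            rw [ENNReal.mul_rpow_of_nonneg _ _ (by positivity : (0:ℝ) ≤ 1 / (r * p.toReal)),
              ENNReal.mul_rpow_of_nonneg _ _ (by positivity : (0:ℝ) ≤ 1 / (r * p.toReal))]
        _ = (ENNReal.ofReal r) ^ (1 / (r * p.toReal)) * (2 * Ic ^ (1 / (r * p.toReal))) := by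
            rw [← ENNReal.rpow_mul, mul_one_div, div_self hrq0.ne', ENNReal.rpow_one]
        _ ≤ ENNReal.ofReal r * (2 * Ic ^ (1 / (r * p.toReal))) := by
            refine mul_le_mul_left ?_ _
            calc (ENNReal.ofReal r) ^ (1 / (r * p.toReal))
                ≤ (ENNReal.ofReal r) ^ (1:ℝ) :=
                  ENNReal.rpow_le_rpow_of_exponent_le (ENNReal.one_le_ofReal.mpr hr1)
                    (by rw [div_le_one hrq0]; exact hrq1)
              _ = ENNReal.ofReal r := ENNReal.rpow_one _
        _ = 2 * ENNReal.ofReal r * Ic ^ (1 / (r * p.toReal)) := by ring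
    · rw [← ENNReal.rpow_mul, hexp]
      have hJI : J ≤ I := by
        rw [hIJ]; exact le_mul_of_one_le_left zero_le (ENNReal.one_le_ofReal.mpr hr1)
      calc Ic ^ (1 / (r * p.toReal))
          ≤ (2 ^ (r * p.toReal) * J) ^ (1 / (r * p.toReal)) :=
            ENNReal.rpow_le_rpow hIcJ (by positivity)
        _ = 2 * J ^ (1 / (r * p.toReal)) := by
            rw [ENNReal.mul_rpow_of_nonneg _ _ (by positivity : (0:ℝ) ≤ 1 / (r * p.toReal)),
              ← ENNReal.rpow_mul, mul_one_div, div_self hrq0.ne', ENNReal.rpow_one]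
        _ ≤ 2 * I ^ (1 / (r * p.toReal)) :=
            mul_le_mul_right (ENNReal.rpow_le_rpow hJI (by positivity)) 2
        _ ≤ 2 * ENNReal.ofReal r * I ^ (1 / (r * p.toReal)) := mul_le_mul_left hC2 _

end
end
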